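/- Let x > 1, y > 0 and t ∈ (0,1] be real, and set u = x + i t y. Then, taking all arguments in [0, 2π), one has arg( 1/(u² · √(1 − 1/u)) ) = 2π − ( (3/2)·arg(u) + (1/2)·arg(u−1) ), and this value lies in the open interval (π, 2π). Here √ denotes the principal branch of the complex square root. -/

import Mathlib

open Complex Real

/-- The argument of a nonzero complex number normalized to `[0, 2π)`. -/
noncomputable def arg2pi (w : ℂ) : ℝ :=
  if Complex.arg w < 0 then Complex.arg w + 2 * Real.pi else Complex.arg w

/-!
For `Re u > 1` and `Im u > 0` both `u` and `u - 1` lie in the open first quadrant, so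
`a = arg u` and `b = arg (u - 1)` lie in `(0, π/2)`. Every argument along the way then stays
inside `(-π, π]`, so principal arguments add without correction:
`arg (u² √(1 - 1/u)) = 2a + (b - a)/2 = (3/2) a + (1/2) b ∈ (0, π)`, and inverting negates it,
which normalized to `[0, 2π)` gives `2π - ((3/2) a + (1/2) b) ∈ (π, 2π)`.
-/

lemma arg2pi_of_nonneg {w : ℂ} (h : 0 ≤ arg w) : arg2pi w = arg w :=
  if_neg h.not_gt

lemma arg2pi_one_div_of_arg_mem_Ioo {z : ℂ} (h : arg z ∈ Set.Ioo 0 π) :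
    arg2pi (1 / z) = 2 * π - arg z := by
  have hinv : arg (1 / z) = -arg z := by
    rw [one_div, arg_inv, if_neg h.2.ne]
  rw [arg2pi, if_pos (by rw [hinv]; linarith [h.1]), hinv]
  ring

lemma arg_cpow_ofReal {w : ℂ} (hw : w ≠ 0) {r : ℝ} (h : r * arg w ∈ Set.Ioc (-π) π) :
    arg (w ^ (r : ℂ)) = r * arg w := by
  have him : (log w * r).im = r * arg w := by
    rw [mul_comm, im_ofReal_mul, log_im]
  rw [cpow_def_of_ne_zero hw, arg_exp, him, toIocMod_eq_self]
  simpa [two_mul, ← add_assoc] using h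

lemma arg_cpow_one_half {w : ℂ} (hw : w ≠ 0) : arg (w ^ (1 / 2 : ℂ)) = arg w / 2 := by
  have h := arg_cpow_ofReal hw (r := 1 / 2)
    ⟨by linarith [neg_pi_lt_arg w, pi_pos], by linarith [arg_le_pi w, pi_pos]⟩
  push_cast at h
  rw [h]
  ring

lemma arg_pos_of_im_pos {z : ℂ} (him : 0 < z.im) : 0 < arg z :=
  (arg_nonneg_iff.2 him.le).lt_of_ne fun h => him.ne' (arg_eq_zero_iff.1 h.symm).2

lemma arg_mem_Ioo_zero_pi_div_two {z : ℂ} (hre : 0 < z.re) (him : 0 < z.im) :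
    arg z ∈ Set.Ioo 0 (π / 2) :=
  ⟨arg_pos_of_im_pos him, arg_lt_pi_div_two_iff.2 (Or.inl hre)⟩

lemma arg_one_sub_one_div {u : ℂ} (him : 0 < u.im) :
    arg (1 - 1 / u) = arg (u - 1) - arg u := by
  have hu : u ≠ 0 := fun h => him.ne' (by simp [h])
  have hu1 : u - 1 ≠ 0 := fun h => him.ne' (by simpa using congrArg im h)
  have ha := arg_pos_of_im_pos him
  have hb := arg_pos_of_im_pos (z := u - 1) (by simpa using him)
  have hinv : arg u⁻¹ = -arg u := by
    rw [arg_inv, if_neg fun h => him.ne' (arg_eq_pi_iff.1 h).2]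
  have hsplit : 1 - 1 / u = (u - 1) * u⁻¹ := by field_simp
  rw [hsplit, arg_mul hu1 (inv_ne_zero hu), hinv, ← sub_eq_add_neg]
  rw [hinv]
  constructor <;> linarith [arg_le_pi u, arg_le_pi (u - 1)]

lemma arg_sq_of_re_pos {u : ℂ} (hre : 0 < u.re) : arg (u ^ 2) = 2 * arg u := by
  have hu : u ≠ 0 := fun h => hre.ne' (by simp [h])
  have hbound := abs_lt.1 (abs_arg_lt_pi_div_two_iff.2 (Or.inl hre))
  rw [sq, arg_mul hu hu, two_mul]
  constructor <;> linarith

lemma arg_sq_mul_cpow_one_half_one_sub_one_div {u : ℂ} (hre : 1 < u.re) (him : 0 < u.im) :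
    arg (u ^ 2 * (1 - 1 / u) ^ (1 / 2 : ℂ)) = 3 / 2 * arg u + 1 / 2 * arg (u - 1) := by
  have hu : u ≠ 0 := fun h => him.ne' (by simp [h])
  have hw : 1 - 1 / u ≠ 0 := by
    rw [sub_ne_zero, ne_comm, one_div, inv_ne_one]
    exact fun h => him.ne' (by simp [h])
  obtain ⟨ha0, ha⟩ := arg_mem_Ioo_zero_pi_div_two (by linarith) him
  obtain ⟨hb0, hb⟩ := arg_mem_Ioo_zero_pi_div_two (z := u - 1) (by simpa using hre)
    (by simpa using him)
  have hsqrt : arg ((1 - 1 / u) ^ (1 / 2 : ℂ)) = (arg (u - 1) - arg u) / 2 := by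
    rw [arg_cpow_one_half hw, arg_one_sub_one_div him]
  rw [arg_mul (pow_ne_zero 2 hu) (cpow_ne_zero_iff.2 (Or.inl hw)), arg_sq_of_re_pos (by linarith),
    hsqrt]
  · ring
  rw [arg_sq_of_re_pos (by linarith), hsqrt]
  constructor <;> linarith

/-- For `x > 1`, `y > 0`, `t ∈ (0,1]` and `u = x + ity`, with arguments taken in `[0,2π)`:
`arg(1/(u²√(1-1/u))) = 2π - ((3/2) arg u + (1/2) arg(u-1))`, and this value lies
in `(π, 2π)`. -/
theorem stmt_8 (x y t : ℝ) (hx : 1 < x) (hy : 0 < y) (ht : t ∈ Set.Ioc (0 : ℝ) 1) :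
    (fun u : ℂ =>
      arg2pi (1 / (u ^ 2 * ((1 - 1 / u) ^ (1/2 : ℂ))))
        = 2 * Real.pi - ((3 / 2) * arg2pi u + (1 / 2) * arg2pi (u - 1))
      ∧ arg2pi (1 / (u ^ 2 * ((1 - 1 / u) ^ (1/2 : ℂ)))) ∈
          Set.Ioo Real.pi (2 * Real.pi))
    ((x : ℂ) + (t : ℂ) * (y : ℂ) * Complex.I) := by
  beta_reduce
  set u : ℂ := (x : ℂ) + (t : ℂ) * (y : ℂ) * Complex.I
  have hre : 1 < u.re := by simpa [u] using hx
  have him : 0 < u.im := by simpa [u] using mul_pos ht.1 hy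
  obtain ⟨ha0, ha⟩ := arg_mem_Ioo_zero_pi_div_two (by linarith) him
  obtain ⟨hb0, hb⟩ := arg_mem_Ioo_zero_pi_div_two (z := u - 1) (by simpa using hre)
    (by simpa using him)
  have hprod := arg_sq_mul_cpow_one_half_one_sub_one_div hre him
  rw [arg2pi_one_div_of_arg_mem_Ioo (by rw [hprod]; constructor <;> linarith), hprod,
    arg2pi_of_nonneg ha0.le, arg2pi_of_nonneg hb0.le]
  exact ⟨rfl, by constructor <;> linarith⟩
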